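/- Let Frac(L·R) = Frac(R) + 1/Frac(L) in ℚ ∪ {∞}. If negation of a tangle expression is defined leafwise (negating every integer leaf), then Frac(-A) = -Frac(A) for every expression A. -/

import Mathlib

/-- The projective rational line `ℚ ∪ {∞}`, with `none` playing the role of `∞`. -/
abbrev QInf := Option ℚ

/-- Negation on `ℚ ∪ {∞}`, with `-∞ = ∞`. -/
def qneg : QInf → QInf
  | none => none
  | some q => some (-q)

/-- Reciprocal on `ℚ ∪ {∞}`, with `1/0 = ∞` and `1/∞ = 0`. -/
def qinv : QInf → QInf
  | none => some 0
  | some q => if q = 0 then none else some q⁻¹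

/-- Addition on `ℚ ∪ {∞}`, with `x + ∞ = ∞ + x = ∞`. -/
def qadd : QInf → QInf → QInf
  | none, _ => none
  | _, none => none
  | some a, some b => some (a + b)

/-- Tangle expressions: the free magma generated by integer leaves,
with the binary product corresponding to Conway's tangle multiplication. -/
inductive Tang where
  | leaf : ℤ → Tang
  | mul : Tang → Tang → Tang

/-- The Conway fraction of a tangle expression:
`Frac n = n` on integer leaves and `Frac (L·R) = Frac R + 1/Frac L` in `ℚ ∪ {∞}`. -/
def Frac : Tang → QInf
  | .leaf n => some (n : ℚ)
  | .mul L R => qadd (Frac R) (qinv (Frac L))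

/-- Leafwise negation of a tangle expression (mirror reflection). -/
def negT : Tang → Tang
  | .leaf n => .leaf (-n)
  | .mul L R => .mul (negT L) (negT R)

theorem qinv_qneg (x : QInf) : qinv (qneg x) = qneg (qinv x) := by
  rcases x with _ | q
  · rfl
  · by_cases hq : q = 0 <;> simp [qinv, qneg, hq]

theorem qadd_qneg (x y : QInf) : qadd (qneg x) (qneg y) = qneg (qadd x y) := by
  rcases x with _ | a <;> rcases y with _ | b
  all_goals simp only [qadd, qneg]
  rw [neg_add]

/-- Negating every integer leaf negates the Conway fraction:
`Frac (-A) = -Frac A` in `ℚ ∪ {∞}`. -/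
theorem stmt_4 (A : Tang) : Frac (negT A) = qneg (Frac A) := by
  induction A with
  | leaf n => simp only [negT, Frac, qneg, Int.cast_neg]
  | mul L R ihL ihR => simp only [negT, Frac, ihL, ihR, qinv_qneg, qadd_qneg]
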